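/- arXiv:2303.01951 — 2 statements merged into one kernel-verified Lean document; each statement's English description precedes it below -/
import Mathlib

section
/- Let L ≥ 1 and 1 ≤ p⁻ ≤ p⁺ < ∞. Let (g_j) be convex functions g_j : ℝ^d → [0,∞) with 0 ≤ g_j(ξ) ≤ L(1 + |ξ|^{p_j}) for exponents p_j ∈ [p⁻, p⁺], and let t_j → +∞. Define ĝ_j(ξ) := g_j(t_j ξ)/t_j^{p_j}. Then there is a subsequence ĝ_{j_k} converging uniformly on every compact subset of ℝ^d to a convex function g_∞ : ℝ^d → [0,∞). If, in addition, p_j → p for some p ≥ 1, then g_∞(ξ) ≤ L|ξ|^p for all ξ. -/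
open Set Filter

open Metric Topology

lemma convexLip {E : Type*} [NormedAddCommGroup E] [NormedSpace ℝ E]
    {f : E → ℝ} (hf : ConvexOn ℝ univ f) (hf0 : ∀ z, 0 ≤ f z)
    {M r : ℝ} (hM : ∀ z ∈ closedBall (0:E) (3*r+1), f z ≤ M)
    {x y : E} (hx : x ∈ closedBall (0:E) r) (hy : y ∈ closedBall (0:E) r) :
    f y ≤ f x + M * ‖y - x‖ := by
  simp only [mem_closedBall, dist_zero_right] at hx hy
  have hr : 0 ≤ r := le_trans (norm_nonneg x) hx
  have hM0 : 0 ≤ M := le_trans (hf0 0) (hM 0 (by simp; linarith))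
  rcases eq_or_ne y x with rfl | hne
  · nlinarith [norm_nonneg (y - y)]
  · set s : ℝ := ‖y - x‖ with hs
    have hs0 : 0 < s := by
      rw [hs]; exact norm_sub_pos_iff.mpr hne
    set z : E := x + (1 + 1/s) • (y - x) with hzdef
    have hsz : ‖z‖ ≤ 3*r + 1 := by
      have h1 : ‖z‖ ≤ ‖x‖ + ‖(1 + 1/s) • (y - x)‖ := norm_add_le _ _
      have h2 : ‖(1 + 1/s) • (y - x)‖ = (1 + 1/s) * s := by
        rw [norm_smul, Real.norm_eq_abs, abs_of_pos (by positivity)]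
      have h3 : s ≤ 2*r := by
        have := norm_sub_le y x; rw [hs]; linarith
      have h4 : (1 + 1/s) * s = s + 1 := by field_simp
      rw [h2, h4] at h1; linarith
    set a : ℝ := s/(s+1) with hadef
    have ha0 : 0 ≤ a := by positivity
    have ha1 : a ≤ 1 := by rw [hadef, div_le_one (by linarith)]; linarith
    have key : a * (1 + 1/s) = 1 := by rw [hadef]; field_simp
    have hy' : (1-a) • x + a • z = y := by
      rw [hzdef, smul_add, smul_smul, key, one_smul]
      module
    have hcvx := hf.2 (mem_univ x) (mem_univ z)
      (by linarith : (0:ℝ) ≤ 1 - a) ha0 (by ring)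
    rw [hy', smul_eq_mul, smul_eq_mul] at hcvx
    have hfz : f z ≤ M := hM z (by simpa [mem_closedBall, dist_zero_right] using hsz)
    have has : a ≤ s := by rw [hadef, div_le_iff₀ (by linarith)]; nlinarith
    have h1 := hf0 x
    have h2 := hf0 z
    nlinarith [mul_le_mul_of_nonneg_left hfz ha0, mul_le_mul_of_nonneg_right has hM0]

/-- scaled convex functions `ĝ_j(ξ) = g_j(t_j ξ)/t_j^{p_j}` admit a
subsequence converging locally uniformly to a convex limit `g_∞ ≥ 0`; if
moreover `p_j → p`, then `g_∞(ξ) ≤ L|ξ|^p`. -/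
theorem scaled_convex_compactness {d : ℕ} (L pm pP : ℝ) (hL : 1 ≤ L)
    (hpm : 1 ≤ pm) (hpmP : pm ≤ pP)
    (g : ℕ → EuclideanSpace ℝ (Fin d) → ℝ)
    (hconv : ∀ j, ConvexOn ℝ univ (g j)) (hnonneg : ∀ j ξ, 0 ≤ g j ξ)
    (pexp : ℕ → ℝ) (hpexp : ∀ j, pexp j ∈ Icc pm pP)
    (hgrowth : ∀ j ξ, g j ξ ≤ L * (1 + ‖ξ‖ ^ pexp j))
    (t : ℕ → ℝ) (ht : Tendsto t atTop atTop) :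
    ∃ (φ : ℕ → ℕ) (ginf : EuclideanSpace ℝ (Fin d) → ℝ),
      StrictMono φ ∧ ConvexOn ℝ univ ginf ∧ (∀ ξ, 0 ≤ ginf ξ) ∧
      (∀ K : Set (EuclideanSpace ℝ (Fin d)), IsCompact K →
        TendstoUniformlyOn
          (fun k ξ => g (φ k) (t (φ k) • ξ) / t (φ k) ^ pexp (φ k))
          ginf atTop K) ∧
      (∀ p : ℝ, 1 ≤ p → Tendsto pexp atTop (nhds p) →
        ∀ ξ, ginf ξ ≤ L * ‖ξ‖ ^ p) := by
  classical
  obtain ⟨N, hN⟩ := eventually_atTop.mp (ht.eventually_ge_atTop 1)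
  set G : ℕ → EuclideanSpace ℝ (Fin d) → ℝ :=
    fun j ξ => g (N + j) (t (N + j) • ξ) / t (N + j) ^ pexp (N + j) with hGdef
  have htj : ∀ j, 1 ≤ t (N + j) := fun j => hN _ (Nat.le_add_right N j)
  have hpe0 : ∀ j, (0:ℝ) ≤ pexp j := fun j => by linarith [(hpexp j).1]
  have hpos : ∀ j, 0 < t (N + j) ^ pexp (N + j) :=
    fun j => Real.rpow_pos_of_pos (lt_of_lt_of_le one_pos (htj j)) _
  have hone : ∀ j, 1 ≤ t (N + j) ^ pexp (N + j) := fun j => by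
    have h := Real.rpow_le_rpow_of_exponent_le (htj j) (hpe0 (N + j) : (0:ℝ) ≤ pexp (N + j))
    rwa [Real.rpow_zero] at h
  have hG0 : ∀ j ξ, 0 ≤ G j ξ := fun j ξ => div_nonneg (hnonneg _ _) (hpos j).le
  have hGbound : ∀ j ξ, G j ξ ≤ L / t (N + j) ^ pexp (N + j) + L * ‖ξ‖ ^ pexp (N + j) := by
    intro j ξ
    have hT0 : (0:ℝ) < t (N + j) := lt_of_lt_of_le one_pos (htj j)
    have hnorm : ‖t (N + j) • ξ‖ = t (N + j) * ‖ξ‖ := by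
      rw [norm_smul, Real.norm_eq_abs, abs_of_pos hT0]
    have h1 : g (N + j) (t (N + j) • ξ) ≤
        L * (1 + t (N + j) ^ pexp (N + j) * ‖ξ‖ ^ pexp (N + j)) := by
      have h := hgrowth (N + j) (t (N + j) • ξ)
      rwa [hnorm, Real.mul_rpow hT0.le (norm_nonneg ξ)] at h
    have h2 : G j ξ ≤
        (L * (1 + t (N + j) ^ pexp (N + j) * ‖ξ‖ ^ pexp (N + j))) / (t (N + j) ^ pexp (N + j)) := by
      rw [hGdef]
      exact div_le_div_of_nonneg_right h1 (hpos j).le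
    refine h2.trans (le_of_eq ?_)
    field_simp
  set B : ℝ → ℝ := fun r => L + L * (max 1 r) ^ pP with hBdef
  have hB0 : ∀ r, 0 ≤ B r := by
    intro r
    have h1 : (0:ℝ) < max 1 r := lt_of_lt_of_le one_pos (le_max_left _ _)
    have h2 := Real.rpow_nonneg h1.le pP
    rw [hBdef]; dsimp only; nlinarith
  have hGB : ∀ j (r : ℝ), ∀ ξ : EuclideanSpace ℝ (Fin d), ‖ξ‖ ≤ r → G j ξ ≤ B r := by
    intro j r ξ hξ
    have h1 : L / t (N + j) ^ pexp (N + j) ≤ L := div_le_self (by linarith) (hone j)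
    have e1 : ‖ξ‖ ^ pexp (N + j) ≤ (max 1 r) ^ pexp (N + j) :=
      Real.rpow_le_rpow (norm_nonneg ξ) (le_trans hξ (le_max_right _ _)) (hpe0 _)
    have e2 : (max 1 r) ^ pexp (N + j) ≤ (max 1 r) ^ pP :=
      Real.rpow_le_rpow_of_exponent_le (le_max_left _ _) (hpexp (N + j)).2
    have h3 := hGbound j ξ
    have hL0 : (0:ℝ) ≤ L := by linarith
    rw [hBdef]; dsimp only
    nlinarith
  have hGconv : ∀ j, ConvexOn ℝ univ (G j) := by
    intro j
    have h1 : ConvexOn ℝ univ (fun ξ : EuclideanSpace ℝ (Fin d) => g (N + j) (t (N + j) • ξ)) := by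
      have h := (hconv (N + j)).comp_linearMap
        (t (N + j) • (LinearMap.id : EuclideanSpace ℝ (Fin d) →ₗ[ℝ] EuclideanSpace ℝ (Fin d)))
      exact h
    have h2 := h1.smul (le_of_lt (inv_pos.mpr (hpos j)) : (0:ℝ) ≤ (t (N + j) ^ pexp (N + j))⁻¹)
    have h3 : (fun ξ : EuclideanSpace ℝ (Fin d) =>
        (t (N + j) ^ pexp (N + j))⁻¹ • g (N + j) (t (N + j) • ξ)) = G j := by
      funext ξ
      rw [hGdef]
      simp [smul_eq_mul, div_eq_inv_mul]
    exact h3 ▸ h2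
  have hLip : ∀ (r : ℝ) (j : ℕ),
      ∀ x ∈ closedBall (0 : EuclideanSpace ℝ (Fin d)) r,
      ∀ y ∈ closedBall (0 : EuclideanSpace ℝ (Fin d)) r,
      dist (G j x) (G j y) ≤ B (3*r+1) * dist x y := by
    intro r j x hx y hy
    have hMb : ∀ z ∈ closedBall (0 : EuclideanSpace ℝ (Fin d)) (3*r+1), G j z ≤ B (3*r+1) := by
      intro z hz
      exact hGB j _ z (by simpa [mem_closedBall, dist_zero_right] using hz)
    have h1 := convexLip (hGconv j) (hG0 j) hMb hx hy
    have h2 := convexLip (hGconv j) (hG0 j) hMb hy hx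
    have e : ‖y - x‖ = ‖x - y‖ := norm_sub_rev _ _
    rw [e] at h1
    rw [Real.dist_eq, dist_eq_norm, abs_sub_le_iff]
    constructor <;> linarith
  -- countable dense subset and subsequence extraction
  obtain ⟨D, hDc, hDd⟩ := TopologicalSpace.exists_countable_dense (EuclideanSpace ℝ (Fin d))
  haveI : Countable ↥D := hDc.to_subtype
  have hScomp : IsCompact (univ.pi fun q : ↥D => Icc (0:ℝ) (B ‖(q : EuclideanSpace ℝ (Fin d))‖)) :=
    isCompact_univ_pi fun q => isCompact_Icc
  have hFS : ∀ j, (fun q : ↥D => G j q) ∈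
      (univ.pi fun q : ↥D => Icc (0:ℝ) (B ‖(q : EuclideanSpace ℝ (Fin d))‖)) := by
    intro j
    rw [mem_univ_pi]
    exact fun q => ⟨hG0 j q, hGB j _ _ le_rfl⟩
  obtain ⟨f₀, -, ψ, hψ, hFconv⟩ := hScomp.tendsto_subseq hFS
  have hpt : ∀ q : ↥D, Tendsto (fun k => G (ψ k) q) atTop (𝓝 (f₀ q)) :=
    fun q => tendsto_pi_nhds.mp hFconv q
  have hcauchy : ∀ ξ : EuclideanSpace ℝ (Fin d), CauchySeq (fun k => G (ψ k) ξ) := by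
    intro ξ
    rw [Metric.cauchySeq_iff]
    intro ε hε
    set r : ℝ := ‖ξ‖ + 1 with hrdef
    set Cr : ℝ := B (3*r+1) with hCrdef
    have hCr : 0 ≤ Cr := hB0 _
    have hδ : 0 < min 1 (ε / (3 * (Cr + 1))) := lt_min one_pos (by positivity)
    obtain ⟨q, hqD, hqd⟩ := Metric.mem_closure_iff.mp (hDd ξ) _ hδ
    have hqr : q ∈ closedBall (0 : EuclideanSpace ℝ (Fin d)) r := by
      simp only [mem_closedBall, dist_zero_right]
      have h5 := norm_sub_norm_le q ξ
      have h6 : dist ξ q < 1 := lt_of_lt_of_le hqd (min_le_left _ _)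
      rw [dist_comm, dist_eq_norm] at h6
      rw [hrdef]; linarith
    have hξr : ξ ∈ closedBall (0 : EuclideanSpace ℝ (Fin d)) r := by
      simp only [mem_closedBall, dist_zero_right, hrdef]; linarith
    have hbound : ∀ k, dist (G (ψ k) ξ) (G (ψ k) q) < ε/3 := by
      intro k
      have h6 : dist (G (ψ k) ξ) (G (ψ k) q) ≤ Cr * dist ξ q := hLip r (ψ k) ξ hξr q hqr
      have h7 : Cr * dist ξ q ≤ Cr * (ε / (3*(Cr+1))) :=
        mul_le_mul_of_nonneg_left (le_of_lt (lt_of_lt_of_le hqd (min_le_right _ _))) hCr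
      have hu : 0 < ε / (3*(Cr+1)) := by positivity
      have hu2 : (3*(Cr+1)) * (ε / (3*(Cr+1))) = ε := by field_simp
      have h8 : Cr * (ε / (3*(Cr+1))) < ε/3 := by nlinarith
      exact lt_of_le_of_lt (h6.trans h7) h8
    have h8 : Tendsto (fun k => G (ψ k) q) atTop (𝓝 (f₀ ⟨q, hqD⟩)) := hpt ⟨q, hqD⟩
    obtain ⟨N₀, hN₀⟩ := Metric.cauchySeq_iff.mp h8.cauchySeq (ε/3) (by linarith)
    refine ⟨N₀, fun m hm n hn => ?_⟩
    have hT := dist_triangle4 (G (ψ m) ξ) (G (ψ m) q) (G (ψ n) q) (G (ψ n) ξ)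
    have hb1 := hbound m
    have hb2 := hbound n
    have hb3 := hN₀ m hm n hn
    have e : dist (G (ψ n) q) (G (ψ n) ξ) = dist (G (ψ n) ξ) (G (ψ n) q) := dist_comm _ _
    linarith
  set ginf : EuclideanSpace ℝ (Fin d) → ℝ :=
    fun ξ => limUnder atTop (fun k => G (ψ k) ξ) with hginfdef
  have hptfull : ∀ ξ, Tendsto (fun k => G (ψ k) ξ) atTop (𝓝 (ginf ξ)) :=
    fun ξ => (hcauchy ξ).tendsto_limUnder
  have hginf0 : ∀ ξ, 0 ≤ ginf ξ := fun ξ =>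
    le_of_tendsto_of_tendsto' tendsto_const_nhds (hptfull ξ) (fun k => hG0 _ _)
  have hginfconv : ConvexOn ℝ univ ginf := by
    refine ⟨convex_univ, ?_⟩
    intro x _ y _ a b ha hb hab
    have h1 : Tendsto (fun k => a * G (ψ k) x + b * G (ψ k) y) atTop
        (𝓝 (a * ginf x + b * ginf y)) :=
      ((hptfull x).const_mul a).add ((hptfull y).const_mul b)
    have h2 := hptfull (a • x + b • y)
    have h3 : ∀ k, G (ψ k) (a • x + b • y) ≤ a * G (ψ k) x + b * G (ψ k) y := by
      intro k
      have h := (hGconv (ψ k)).2 (mem_univ x) (mem_univ y) ha hb hab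
      simpa [smul_eq_mul] using h
    have h4 := le_of_tendsto_of_tendsto' h2 h1 h3
    simpa [smul_eq_mul] using h4
  have huniform : ∀ K : Set (EuclideanSpace ℝ (Fin d)), IsCompact K →
      TendstoUniformlyOn (fun k ξ => G (ψ k) ξ) ginf atTop K := by
    intro K hK
    obtain ⟨r, hr⟩ := (isBounded_iff_subset_closedBall 0).mp hK.isBounded
    haveI : CompactSpace ↥K := isCompact_iff_compactSpace.mp hK
    have hequi : Equicontinuous (fun k (x : ↥K) => G (ψ k) x) := by
      apply Metric.equicontinuous_of_continuity_modulus (fun s => B (3*r+1) * s)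
      · have h := (tendsto_id (x := 𝓝 (0:ℝ))).const_mul (B (3*r+1))
        simpa using h
      · intro x y i
        have h := hLip r (ψ i) x (hr x.2) y (hr y.2)
        simpa [Subtype.dist_eq] using h
    rw [tendstoUniformlyOn_iff_tendstoUniformly_comp_coe]
    have h2 : Tendsto (fun k (x : ↥K) => G (ψ k) x) atTop (𝓝 (fun x : ↥K => ginf x)) :=
      tendsto_pi_nhds.mpr fun x => hptfull x
    have h3 := (hequi.tendsto_uniformFun_iff_pi atTop (fun x : ↥K => ginf x)).mpr h2
    exact UniformFun.tendsto_iff_tendstoUniformly.mp h3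
  have hφmono : StrictMono (fun k => N + ψ k) := fun a b h => Nat.add_lt_add_left (hψ h) N
  have hfinal : ∀ p : ℝ, 1 ≤ p → Tendsto pexp atTop (𝓝 p) →
      ∀ ξ, ginf ξ ≤ L * ‖ξ‖ ^ p := by
    intro p hp1 hpt' ξ
    have hφt : Tendsto (fun k => N + ψ k) atTop atTop := hφmono.tendsto_atTop
    have htT : Tendsto (fun k => t (N + ψ k)) atTop atTop := ht.comp hφt
    have hTP : Tendsto (fun k => t (N + ψ k) ^ pexp (N + ψ k)) atTop atTop := by
      apply tendsto_atTop_mono (fun k => ?_) htT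
      have h1 := Real.rpow_le_rpow_of_exponent_le (htj (ψ k))
        (show (1:ℝ) ≤ pexp (N + ψ k) by linarith [(hpexp (N + ψ k)).1])
      rwa [Real.rpow_one] at h1
    have hz : Tendsto (fun k => L / t (N + ψ k) ^ pexp (N + ψ k)) atTop (𝓝 0) :=
      Tendsto.div_atTop tendsto_const_nhds hTP
    have hpe : Tendsto (fun k => pexp (N + ψ k)) atTop (𝓝 p) := hpt'.comp hφt
    have hnp : Tendsto (fun k => ‖ξ‖ ^ pexp (N + ψ k)) atTop (𝓝 (‖ξ‖ ^ p)) := by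
      have hc : ContinuousAt (fun q : ℝ × ℝ => q.1 ^ q.2) (‖ξ‖, p) :=
        Real.continuousAt_rpow _ (Or.inr (by linarith))
      have h := hc.tendsto.comp ((tendsto_const_nhds (x := ‖ξ‖)).prodMk_nhds hpe)
      exact h
    have hlim : Tendsto
        (fun k => L / t (N + ψ k) ^ pexp (N + ψ k) + L * ‖ξ‖ ^ pexp (N + ψ k)) atTop
        (𝓝 (0 + L * ‖ξ‖ ^ p)) := hz.add (hnp.const_mul L)
    have h9 := le_of_tendsto_of_tendsto' (hptfull ξ) hlim (fun k => hGbound (ψ k) ξ)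
    simpa using h9
  exact ⟨fun k => N + ψ k, ginf, hφmono, hginfconv, hginf0, fun K hK => huniform K hK, hfinal⟩
end

section
/- Let B ⊂ ℝ^d be a ball and (p_h) be measurable exponents on B with 1 < p⁻ ≤ p_h(y) ≤ p⁺ < ∞ converging uniformly to p̄ : B → (1,∞). Let (w_h) ⊂ L^{p⁻}(B; ℝ^d) with w_h ⇀ w weakly in L¹(B; ℝ^d). Then ∫_B |w(y)|^{p̄(y)} dy ≤ liminf_{h→∞} ∫_B |w_h(y)|^{p_h(y)} dy. -/
open MeasureTheory Set Filter Metric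
open scoped ENNReal

lemma young_pt {E : Type*} [NormedAddCommGroup E] [InnerProductSpace ℝ E]
    (ξ η : E) {q : ℝ} (hq : 1 < q) :
    q * (inner ℝ ξ η : ℝ) - (q - 1) * ‖η‖ ^ (q / (q - 1)) ≤ ‖ξ‖ ^ q := by
  have hc : q.HolderConjugate (q / (q - 1)) := Real.HolderConjugate.conjExponent hq
  have h1 : (inner ℝ ξ η : ℝ) ≤ ‖ξ‖ * ‖η‖ := real_inner_le_norm ξ η
  have h2 : ‖ξ‖ * ‖η‖ ≤ ‖ξ‖ ^ q / q + ‖η‖ ^ (q / (q - 1)) / (q / (q - 1)) :=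
    Real.young_inequality_of_nonneg (norm_nonneg _) (norm_nonneg _) hc
  have hq0 : 0 < q := by linarith
  have hq1 : (0:ℝ) < q - 1 := by linarith
  set A := ‖ξ‖ ^ q with hA
  set Bb := ‖η‖ ^ (q / (q - 1)) with hBb
  have h3 : q * (‖ξ‖ * ‖η‖) ≤ q * (A / q + Bb / (q / (q - 1))) :=
    mul_le_mul_of_nonneg_left h2 hq0.le
  have h4 : q * (A / q + Bb / (q / (q - 1))) = A + (q - 1) * Bb := by
    field_simp
  have h5 : q * (inner ℝ ξ η : ℝ) ≤ q * (‖ξ‖ * ‖η‖) := mul_le_mul_of_nonneg_left h1 hq0.le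
  linarith

lemma rpow_bound {x C' e em : ℝ} (hx0 : 0 ≤ x) (hxC : x ≤ C') (hC' : 1 ≤ C')
    (he0 : 0 ≤ e) (hee : e ≤ em) : x ^ e ≤ C' ^ em := by
  rcases le_total x 1 with hx1 | hx1
  · have h1 : x ^ e ≤ 1 := Real.rpow_le_one hx0 hx1 he0
    have h2 : (1:ℝ) ≤ C' ^ em := by
      have := Real.rpow_le_rpow_of_exponent_le hC' (le_trans he0 hee : (0:ℝ) ≤ em)
      simpa using this
    linarith
  · calc x ^ e ≤ C' ^ e := Real.rpow_le_rpow hx0 hxC he0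
    _ ≤ C' ^ em := Real.rpow_le_rpow_of_exponent_le hC' hee

lemma ofReal_integral_le {α : Type*} [MeasurableSpace α] {μ : Measure α} {f : α → ℝ}
    {g : α → ℝ≥0∞} (hf : Integrable f μ) (h : ∀ᵐ y ∂μ, ENNReal.ofReal (f y) ≤ g y) :
    ENNReal.ofReal (∫ y, f y ∂μ) ≤ ∫⁻ y, g y ∂μ := by
  have h1 : ∫ y, f y ∂μ ≤ ∫ y, max (f y) 0 ∂μ :=
    integral_mono hf hf.pos_part fun y => le_max_left _ _
  have h2 : ENNReal.ofReal (∫ y, max (f y) 0 ∂μ) = ∫⁻ y, ENNReal.ofReal (max (f y) 0) ∂μ :=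
    ofReal_integral_eq_lintegral_ofReal hf.pos_part
      (Eventually.of_forall fun y => le_max_right _ _)
  have h3 : ∀ y, ENNReal.ofReal (max (f y) 0) = ENNReal.ofReal (f y) := by
    intro y
    rcases le_total (f y) 0 with hy | hy
    · simp [max_eq_right hy, ENNReal.ofReal_of_nonpos hy]
    · simp [max_eq_left hy]
  calc ENNReal.ofReal (∫ y, f y ∂μ) ≤ ENNReal.ofReal (∫ y, max (f y) 0 ∂μ) :=
        ENNReal.ofReal_le_ofReal h1
    _ = ∫⁻ y, ENNReal.ofReal (max (f y) 0) ∂μ := h2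
    _ = ∫⁻ y, ENNReal.ofReal (f y) ∂μ := lintegral_congr fun y => h3 y
    _ ≤ ∫⁻ y, g y ∂μ := lintegral_mono_ae h

lemma tendsto_rpow_exp {c : ℝ} (hc : 0 ≤ c) {e : ℕ → ℝ} {einf : ℝ}
    (he : Tendsto e atTop (nhds einf)) (heinf : 0 < einf) (hepos : ∀ n, 0 < e n) :
    Tendsto (fun n => c ^ e n) atTop (nhds (c ^ einf)) := by
  rcases eq_or_lt_of_le hc with h0 | h0
  · have h1 : (fun n => c ^ e n) = fun _ => (0:ℝ) := by
      funext n; rw [← h0, Real.zero_rpow (hepos n).ne']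
    rw [h1, ← h0, Real.zero_rpow heinf.ne']
    exact tendsto_const_nhds
  · exact ((Real.continuousAt_rpow (c, einf) (Or.inl h0.ne')).tendsto.comp
      (tendsto_const_nhds.prodMk_nhds he))

set_option maxHeartbeats 2000000 in
/-- lower semicontinuity of variable-exponent energies along weak
`L¹` convergence: if `p_h → p̄` uniformly on the ball `B` and `w_h ⇀ w` weakly
in `L¹(B;ℝ^d)`, then `∫_B |w|^{p̄(y)} ≤ liminf ∫_B |w_h|^{p_h(y)}`. -/
theorem lower_semicontinuity_variable_exponent {d : ℕ}
    (x₀ : EuclideanSpace ℝ (Fin d)) (r : ℝ) (hr : 0 < r)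
    (B : Set (EuclideanSpace ℝ (Fin d))) (hB : B = ball x₀ r)
    (pm pP : ℝ) (hpm : 1 < pm) (hpmP : pm ≤ pP)
    (p : ℕ → EuclideanSpace ℝ (Fin d) → ℝ) (hpmeas : ∀ h, Measurable (p h))
    (hpbounds : ∀ h, ∀ y ∈ B, pm ≤ p h y ∧ p h y ≤ pP)
    (pbar : EuclideanSpace ℝ (Fin d) → ℝ) (hpbarmeas : Measurable pbar)
    (hpbarrange : ∀ y ∈ B, 1 < pbar y)
    (hpconv : TendstoUniformlyOn p pbar atTop B)
    (w : ℕ → EuclideanSpace ℝ (Fin d) → EuclideanSpace ℝ (Fin d))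
    (hwLp : ∀ h, MemLp (w h) (ENNReal.ofReal pm) (volume.restrict B))
    (w₀ : EuclideanSpace ℝ (Fin d) → EuclideanSpace ℝ (Fin d))
    (hw₀ : IntegrableOn w₀ B)
    (hweak : ∀ g : EuclideanSpace ℝ (Fin d) → EuclideanSpace ℝ (Fin d),
      AEStronglyMeasurable g (volume.restrict B) → (∃ C : ℝ, ∀ y, ‖g y‖ ≤ C) →
      Tendsto (fun h => ∫ y in B, (inner ℝ (w h y) (g y) : ℝ)) atTop
        (nhds (∫ y in B, (inner ℝ (w₀ y) (g y) : ℝ)))) :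
    (∫⁻ y in B, ENNReal.ofReal (‖w₀ y‖ ^ pbar y)) ≤
      Filter.liminf (fun h => ∫⁻ y in B, ENNReal.ofReal (‖w h y‖ ^ p h y)) atTop := by
  have hBmeas : MeasurableSet B := by rw [hB]; exact measurableSet_ball
  have hBfin : volume B < ⊤ := by rw [hB]; exact measure_ball_lt_top
  haveI hfin : IsFiniteMeasure (volume.restrict B) :=
    ⟨by rwa [Measure.restrict_apply_univ]⟩
  have haeB : ∀ᵐ y ∂(volume.restrict B), y ∈ B := ae_restrict_mem hBmeas
  have hpm0 : (0:ℝ) < pm := lt_trans one_pos hpm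
  have hpP1 : (1:ℝ) < pP := lt_of_lt_of_le hpm hpmP
  have hpP0 : (0:ℝ) < pP := lt_trans one_pos hpP1
  have hpbarB : ∀ y ∈ B, pm ≤ pbar y ∧ pbar y ≤ pP := by
    intro y hy
    have ht : Tendsto (fun h => p h y) atTop (nhds (pbar y)) := hpconv.tendsto_at hy
    exact ⟨ge_of_tendsto ht (Eventually.of_forall fun h => (hpbounds h y hy).1),
      le_of_tendsto ht (Eventually.of_forall fun h => (hpbounds h y hy).2)⟩
  have hwm : ∀ h, AEStronglyMeasurable (w h) (volume.restrict B) := fun h => (hwLp h).1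
  have hwint : ∀ h, Integrable (w h) (volume.restrict B) := by
    intro h
    exact memLp_one_iff_integrable.mp <|
      (hwLp h).mono_exponent (ENNReal.one_le_ofReal.mpr hpm.le)
  have hw₀int : Integrable w₀ (volume.restrict B) := hw₀
  -- range facts for the conjugate exponent
  have he_range : ∀ q : ℝ, pm ≤ q → 0 ≤ q / (q - 1) ∧ q / (q - 1) ≤ pm / (pm - 1) := by
    intro q hq
    have hq1 : (1:ℝ) < q := lt_of_lt_of_le hpm hq
    constructor
    · exact div_nonneg (by linarith) (by linarith)
    · rw [div_le_div_iff₀ (by linarith) (by linarith)]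
      nlinarith
  -- THE KEY INEQUALITY
  have key : ∀ η : EuclideanSpace ℝ (Fin d) → EuclideanSpace ℝ (Fin d),
      AEStronglyMeasurable η (volume.restrict B) → ∀ C : ℝ, 0 ≤ C → (∀ y, ‖η y‖ ≤ C) →
      ENNReal.ofReal (∫ y in B, (pbar y * (inner ℝ (w₀ y) (η y) : ℝ)
          - (pbar y - 1) * ‖η y‖ ^ (pbar y / (pbar y - 1)))) ≤
        Filter.liminf (fun h => ∫⁻ y in B, ENNReal.ofReal (‖w h y‖ ^ p h y)) atTop := by
    intro η hηm C hC0 hC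
    set C' : ℝ := max C 1 with hC'def
    have hC'1 : (1:ℝ) ≤ C' := le_max_right _ _
    have hηC' : ∀ y, ‖η y‖ ≤ C' := fun y => (hC y).trans (le_max_left _ _)
    have hηaem : AEMeasurable η (volume.restrict B) := hηm.aemeasurable
    -- integrability of the three pieces
    have hinner_bd : ∀ h, ∀ y, |(inner ℝ (w h y) (η y) : ℝ)| ≤ C * ‖w h y‖ := by
      intro h y
      have h1 := abs_real_inner_le_norm (w h y) (η y)
      nlinarith [hC y, norm_nonneg (w h y), norm_nonneg (η y)]
    have hT1int : ∀ h, Integrable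
        (fun y => pbar y * (inner ℝ (w h y) (η y) : ℝ)) (volume.restrict B) := by
      intro h
      refine Integrable.mono' (((hwint h).norm.const_mul (pP * C)))
        ((hpbarmeas.aemeasurable.mul (((hwm h).aemeasurable).inner hηaem)).aestronglyMeasurable) ?_
      filter_upwards [haeB] with y hy
      obtain ⟨hb1, hb2⟩ := hpbarB y hy
      have h1 : |pbar y| ≤ pP := abs_le.mpr ⟨by linarith, hb2⟩
      calc ‖pbar y * (inner ℝ (w h y) (η y) : ℝ)‖
          = |pbar y| * |(inner ℝ (w h y) (η y) : ℝ)| := by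
            rw [Real.norm_eq_abs, abs_mul]
        _ ≤ pP * (C * ‖w h y‖) :=
            mul_le_mul h1 (hinner_bd h y) (abs_nonneg _) hpP0.le
        _ = pP * C * ‖w h y‖ := by ring
    have hT2int : ∀ h, Integrable
        (fun y => (p h y - pbar y) * (inner ℝ (w h y) (η y) : ℝ)) (volume.restrict B) := by
      intro h
      refine Integrable.mono' (((hwint h).norm.const_mul (2 * pP * C)))
        ((((hpmeas h).sub hpbarmeas).aemeasurable.mul
          (((hwm h).aemeasurable).inner hηaem)).aestronglyMeasurable) ?_
      filter_upwards [haeB] with y hy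
      obtain ⟨hb1, hb2⟩ := hpbarB y hy
      obtain ⟨hc1, hc2⟩ := hpbounds h y hy
      have h1 : |p h y - pbar y| ≤ 2 * pP := abs_le.mpr ⟨by linarith, by linarith⟩
      calc ‖(p h y - pbar y) * (inner ℝ (w h y) (η y) : ℝ)‖
          = |p h y - pbar y| * |(inner ℝ (w h y) (η y) : ℝ)| := by
            rw [Real.norm_eq_abs, abs_mul]
        _ ≤ 2 * pP * (C * ‖w h y‖) :=
            mul_le_mul h1 (hinner_bd h y) (abs_nonneg _) (by positivity)
        _ = 2 * pP * C * ‖w h y‖ := by ring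
    have hT3m : ∀ h, AEStronglyMeasurable
        (fun y => (p h y - 1) * ‖η y‖ ^ (p h y / (p h y - 1))) (volume.restrict B) := by
      intro h
      exact (((hpmeas h).sub measurable_const).aemeasurable.mul
        (hηaem.norm.pow ((hpmeas h).div ((hpmeas h).sub measurable_const)).aemeasurable)).aestronglyMeasurable
    have hT3bd : ∀ (qf : EuclideanSpace ℝ (Fin d) → ℝ), ∀ y ∈ B, pm ≤ qf y → qf y ≤ pP →
        ‖(qf y - 1) * ‖η y‖ ^ (qf y / (qf y - 1))‖ ≤ pP * C' ^ (pm / (pm - 1)) := by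
      intro qf y hy hq1 hq2
      obtain ⟨he1, he2⟩ := he_range (qf y) hq1
      have h1 : |qf y - 1| ≤ pP := abs_le.mpr ⟨by linarith, by linarith⟩
      have h2 : |‖η y‖ ^ (qf y / (qf y - 1))| ≤ C' ^ (pm / (pm - 1)) := by
        rw [abs_of_nonneg (Real.rpow_nonneg (norm_nonneg _) _)]
        exact rpow_bound (norm_nonneg _) (hηC' y) hC'1 he1 he2
      calc ‖(qf y - 1) * ‖η y‖ ^ (qf y / (qf y - 1))‖
          = |qf y - 1| * |‖η y‖ ^ (qf y / (qf y - 1))| := by rw [Real.norm_eq_abs, abs_mul]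
        _ ≤ pP * C' ^ (pm / (pm - 1)) :=
            mul_le_mul h1 h2 (abs_nonneg _) hpP0.le
    have hT3int : ∀ h, Integrable
        (fun y => (p h y - 1) * ‖η y‖ ^ (p h y / (p h y - 1))) (volume.restrict B) := by
      intro h
      refine Integrable.mono' (integrable_const (pP * C' ^ (pm / (pm - 1)))) (hT3m h) ?_
      filter_upwards [haeB] with y hy
      exact hT3bd (p h) y hy (hpbounds h y hy).1 (hpbounds h y hy).2
    have hA1int : Integrable
        (fun y => pbar y * (inner ℝ (w₀ y) (η y) : ℝ)) (volume.restrict B) := by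
      refine Integrable.mono' ((hw₀int.norm.const_mul (pP * C)))
        ((hpbarmeas.aemeasurable.mul ((hw₀int.1.aemeasurable).inner hηaem)).aestronglyMeasurable) ?_
      filter_upwards [haeB] with y hy
      obtain ⟨hb1, hb2⟩ := hpbarB y hy
      have h1 : |pbar y| ≤ pP := abs_le.mpr ⟨by linarith, hb2⟩
      have h2 : |(inner ℝ (w₀ y) (η y) : ℝ)| ≤ C * ‖w₀ y‖ := by
        have h1 := abs_real_inner_le_norm (w₀ y) (η y)
        nlinarith [hC y, norm_nonneg (w₀ y), norm_nonneg (η y)]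
      calc ‖pbar y * (inner ℝ (w₀ y) (η y) : ℝ)‖
          = |pbar y| * |(inner ℝ (w₀ y) (η y) : ℝ)| := by rw [Real.norm_eq_abs, abs_mul]
        _ ≤ pP * (C * ‖w₀ y‖) := mul_le_mul h1 h2 (abs_nonneg _) hpP0.le
        _ = pP * C * ‖w₀ y‖ := by ring
    have hA3m : AEStronglyMeasurable
        (fun y => (pbar y - 1) * ‖η y‖ ^ (pbar y / (pbar y - 1))) (volume.restrict B) := by
      exact ((hpbarmeas.sub measurable_const).aemeasurable.mul
        (hηaem.norm.pow (hpbarmeas.div (hpbarmeas.sub measurable_const)).aemeasurable)).aestronglyMeasurable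
    have hA3int : Integrable
        (fun y => (pbar y - 1) * ‖η y‖ ^ (pbar y / (pbar y - 1))) (volume.restrict B) := by
      refine Integrable.mono' (integrable_const (pP * C' ^ (pm / (pm - 1)))) hA3m ?_
      filter_upwards [haeB] with y hy
      exact hT3bd pbar y hy (hpbarB y hy).1 (hpbarB y hy).2
    -- the basic Young estimate, integrated
    have hfh_le : ∀ h, ENNReal.ofReal (∫ y in B,
        (pbar y * (inner ℝ (w h y) (η y) : ℝ)
          + (p h y - pbar y) * (inner ℝ (w h y) (η y) : ℝ)
          - (p h y - 1) * ‖η y‖ ^ (p h y / (p h y - 1)))) ≤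
        ∫⁻ y in B, ENNReal.ofReal (‖w h y‖ ^ p h y) := by
      intro h
      refine ofReal_integral_le (((hT1int h).add (hT2int h)).sub (hT3int h)) ?_
      filter_upwards [haeB] with y hy
      apply ENNReal.ofReal_le_ofReal
      have hq1 : 1 < p h y := lt_of_lt_of_le hpm (hpbounds h y hy).1
      have hyoung := young_pt (w h y) (η y) hq1
      calc pbar y * (inner ℝ (w h y) (η y) : ℝ)
            + (p h y - pbar y) * (inner ℝ (w h y) (η y) : ℝ)
            - (p h y - 1) * ‖η y‖ ^ (p h y / (p h y - 1))
          = p h y * (inner ℝ (w h y) (η y) : ℝ)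
            - (p h y - 1) * ‖η y‖ ^ (p h y / (p h y - 1)) := by ring
        _ ≤ ‖w h y‖ ^ p h y := hyoung
    -- liminf machinery
    refine ENNReal.le_of_forall_pos_le_add fun ε hε hLtop => ?_
    have hLne : Filter.liminf (fun h => ∫⁻ y in B, ENNReal.ofReal (‖w h y‖ ^ p h y)) atTop ≠ ⊤ :=
      hLtop.ne
    have hlt : Filter.liminf (fun h => ∫⁻ y in B, ENNReal.ofReal (‖w h y‖ ^ p h y)) atTop <
        Filter.liminf (fun h => ∫⁻ y in B, ENNReal.ofReal (‖w h y‖ ^ p h y)) atTop + ε :=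
      ENNReal.lt_add_right hLne (by exact_mod_cast hε.ne')
    obtain ⟨φ, hφm, hφ⟩ := extraction_of_frequently_atTop (frequently_lt_of_liminf_lt (h := hlt))
    set Lε : ℝ≥0∞ :=
      Filter.liminf (fun h => ∫⁻ y in B, ENNReal.ofReal (‖w h y‖ ^ p h y)) atTop + ε with hLεdef
    have hLεne : Lε ≠ ⊤ := by
      rw [hLεdef]
      exact ENNReal.add_ne_top.mpr ⟨hLne, ENNReal.coe_ne_top⟩
    set M : ℝ := (volume B + Lε).toReal with hMdef
    have hMnn : 0 ≤ M := ENNReal.toReal_nonneg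
    -- uniform L¹ bound along the subsequence
    have hbound : ∀ k, ∫ y in B, ‖w (φ k) y‖ ≤ M := by
      intro k
      have h1 : ENNReal.ofReal (∫ y in B, ‖w (φ k) y‖)
          = ∫⁻ y in B, ENNReal.ofReal ‖w (φ k) y‖ :=
        ofReal_integral_eq_lintegral_ofReal (hwint _).norm
          (Eventually.of_forall fun y => norm_nonneg _)
      have h2 : (∫⁻ y in B, ENNReal.ofReal ‖w (φ k) y‖) ≤
          volume B + ∫⁻ y in B, ENNReal.ofReal (‖w (φ k) y‖ ^ p (φ k) y) := by
        have hpt : ∀ᵐ y ∂(volume.restrict B), ENNReal.ofReal ‖w (φ k) y‖ ≤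
            1 + ENNReal.ofReal (‖w (φ k) y‖ ^ p (φ k) y) := by
          filter_upwards [haeB] with y hy
          rcases le_total ‖w (φ k) y‖ 1 with h | h
          · calc ENNReal.ofReal ‖w (φ k) y‖ ≤ ENNReal.ofReal 1 := ENNReal.ofReal_le_ofReal h
              _ = 1 := ENNReal.ofReal_one
              _ ≤ _ := le_self_add
          · have h3 : ‖w (φ k) y‖ ≤ ‖w (φ k) y‖ ^ p (φ k) y := by
              have := Real.rpow_le_rpow_of_exponent_le h
                (le_trans hpm.le (hpbounds (φ k) y hy).1)
              rwa [Real.rpow_one] at this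
            calc ENNReal.ofReal ‖w (φ k) y‖
                ≤ ENNReal.ofReal (‖w (φ k) y‖ ^ p (φ k) y) := ENNReal.ofReal_le_ofReal h3
              _ ≤ _ := le_add_self
        calc (∫⁻ y in B, ENNReal.ofReal ‖w (φ k) y‖)
            ≤ ∫⁻ y in B, (1 + ENNReal.ofReal (‖w (φ k) y‖ ^ p (φ k) y)) :=
              lintegral_mono_ae hpt
          _ = volume B + ∫⁻ y in B, ENNReal.ofReal (‖w (φ k) y‖ ^ p (φ k) y) := by
              rw [lintegral_add_left measurable_const, lintegral_one,
                Measure.restrict_apply_univ]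
      have h3 : ENNReal.ofReal (∫ y in B, ‖w (φ k) y‖) ≤ volume B + Lε := by
        rw [h1]
        exact h2.trans (add_le_add le_rfl (hφ k).le)
      have h4 := ENNReal.toReal_mono
        (ENNReal.add_ne_top.mpr ⟨hBfin.ne, hLεne⟩) h3
      rwa [ENNReal.toReal_ofReal (integral_nonneg fun y => norm_nonneg _)] at h4
    -- convergence of the main (frozen-exponent) term
    have hT1conv : Tendsto (fun h => ∫ y in B, pbar y * (inner ℝ (w h y) (η y) : ℝ)) atTop
        (nhds (∫ y in B, pbar y * (inner ℝ (w₀ y) (η y) : ℝ))) := by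
      set g : EuclideanSpace ℝ (Fin d) → EuclideanSpace ℝ (Fin d) :=
        B.indicator (fun y => pbar y • η y) with hgdef
      have hgm : AEStronglyMeasurable g (volume.restrict B) :=
        ((hpbarmeas.aemeasurable.aestronglyMeasurable).smul hηm).indicator hBmeas
      have hgb : ∀ y, ‖g y‖ ≤ pP * C := by
        intro y
        by_cases hy : y ∈ B
        · rw [hgdef, indicator_of_mem hy, norm_smul, Real.norm_eq_abs]
          obtain ⟨hb1, hb2⟩ := hpbarB y hy
          exact mul_le_mul (abs_le.mpr ⟨by linarith, hb2⟩) (hC y) (norm_nonneg _) hpP0.le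
        · rw [hgdef, indicator_of_notMem hy, norm_zero]
          positivity
      have h0 := hweak g hgm ⟨pP * C, hgb⟩
      have heq : ∀ u : EuclideanSpace ℝ (Fin d) → EuclideanSpace ℝ (Fin d),
          (∫ y in B, (inner ℝ (u y) (g y) : ℝ)) = ∫ y in B, pbar y * (inner ℝ (u y) (η y) : ℝ) := by
        intro u
        apply integral_congr_ae
        filter_upwards [haeB] with y hy
        rw [hgdef, indicator_of_mem hy, real_inner_smul_right]
      refine Tendsto.congr (fun h => heq (w h)) ?_
      rwa [heq w₀] at h0
    have hT1φ := hT1conv.comp hφm.tendsto_atTop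
    -- convergence of the deterministic term
    have hT3conv : Tendsto
        (fun h => ∫ y in B, (p h y - 1) * ‖η y‖ ^ (p h y / (p h y - 1))) atTop
        (nhds (∫ y in B, (pbar y - 1) * ‖η y‖ ^ (pbar y / (pbar y - 1)))) := by
      refine tendsto_integral_of_dominated_convergence
        (fun _ => pP * C' ^ (pm / (pm - 1))) hT3m (integrable_const _) ?_ ?_
      · intro h
        filter_upwards [haeB] with y hy
        exact hT3bd (p h) y hy (hpbounds h y hy).1 (hpbounds h y hy).2
      · filter_upwards [haeB] with y hy
        have hty : Tendsto (fun h => p h y) atTop (nhds (pbar y)) := hpconv.tendsto_at hy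
        have hp1 : 1 < pbar y := hpbarrange y hy
        have hte : Tendsto (fun h => p h y / (p h y - 1)) atTop
            (nhds (pbar y / (pbar y - 1))) :=
          hty.div (hty.sub tendsto_const_nhds) (by intro hc; rw [sub_eq_zero] at hc; linarith)
        have hrp : Tendsto (fun h => ‖η y‖ ^ (p h y / (p h y - 1))) atTop
            (nhds (‖η y‖ ^ (pbar y / (pbar y - 1)))) := by
          refine tendsto_rpow_exp (norm_nonneg _) hte (div_pos (by linarith) (by linarith)) fun h => ?_
          have := (hpbounds h y hy).1
          have h1 : 1 < p h y := lt_of_lt_of_le hpm this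
          exact div_pos (by linarith) (by linarith)
        exact (hty.sub tendsto_const_nhds).mul hrp
    have hT3φ := hT3conv.comp hφm.tendsto_atTop
    -- the error term along the subsequence
    have hT2err : Tendsto
        (fun k => ∫ y in B, (p (φ k) y - pbar y) * (inner ℝ (w (φ k) y) (η y) : ℝ)) atTop
        (nhds 0) := by
      rw [NormedAddCommGroup.tendsto_nhds_zero]
      intro ε' hε'
      have hδpos : 0 < ε' / (C * M + 1) := div_pos hε' (by nlinarith [mul_nonneg hC0 hMnn])
      have hev := (hφm.tendsto_atTop).eventually (Metric.tendstoUniformlyOn_iff.mp hpconv _ hδpos)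
      filter_upwards [hev] with k hk
      have hnb : ‖∫ y in B, (p (φ k) y - pbar y) * (inner ℝ (w (φ k) y) (η y) : ℝ)‖ ≤
          ε' / (C * M + 1) * C * (∫ y in B, ‖w (φ k) y‖) := by
        have hgint : Integrable (fun y => ε' / (C * M + 1) * C * ‖w (φ k) y‖)
            (volume.restrict B) := (hwint _).norm.const_mul _
        calc ‖∫ y in B, (p (φ k) y - pbar y) * (inner ℝ (w (φ k) y) (η y) : ℝ)‖
            ≤ ∫ y in B, ε' / (C * M + 1) * C * ‖w (φ k) y‖ := by
              refine norm_integral_le_of_norm_le hgint ?_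
              filter_upwards [haeB] with y hy
              have hd : |p (φ k) y - pbar y| ≤ ε' / (C * M + 1) := by
                have := hk y hy
                rw [Real.dist_eq, abs_sub_comm] at this
                exact this.le
              calc ‖(p (φ k) y - pbar y) * (inner ℝ (w (φ k) y) (η y) : ℝ)‖
                  = |p (φ k) y - pbar y| * |(inner ℝ (w (φ k) y) (η y) : ℝ)| := by
                    rw [Real.norm_eq_abs, abs_mul]
                _ ≤ ε' / (C * M + 1) * (C * ‖w (φ k) y‖) :=
                    mul_le_mul hd (hinner_bd (φ k) y) (abs_nonneg _) hδpos.le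
                _ = ε' / (C * M + 1) * C * ‖w (φ k) y‖ := by ring
          _ = ε' / (C * M + 1) * C * (∫ y in B, ‖w (φ k) y‖) := by
              rw [integral_const_mul]
      have hfinal : ε' / (C * M + 1) * C * (∫ y in B, ‖w (φ k) y‖) < ε' := by
        have h5 : ε' / (C * M + 1) * C * (∫ y in B, ‖w (φ k) y‖) ≤
            ε' / (C * M + 1) * (C * M) := by
          have h6 := hbound k
          have h7 : C * (∫ y in B, ‖w (φ k) y‖) ≤ C * M :=
            mul_le_mul_of_nonneg_left h6 hC0
          calc ε' / (C * M + 1) * C * (∫ y in B, ‖w (φ k) y‖)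
              = ε' / (C * M + 1) * (C * (∫ y in B, ‖w (φ k) y‖)) := by ring
            _ ≤ ε' / (C * M + 1) * (C * M) := mul_le_mul_of_nonneg_left h7 hδpos.le
        have h8 : ε' / (C * M + 1) * (C * M) < ε' / (C * M + 1) * (C * M + 1) :=
          mul_lt_mul_of_pos_left (lt_add_one _) hδpos
        have h9 : ε' / (C * M + 1) * (C * M + 1) = ε' := by
          field_simp
        linarith
      exact lt_of_le_of_lt hnb hfinal
    -- combine
    have hsum : Tendsto (fun k =>
        (∫ y in B, pbar y * (inner ℝ (w (φ k) y) (η y) : ℝ))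
        + (∫ y in B, (p (φ k) y - pbar y) * (inner ℝ (w (φ k) y) (η y) : ℝ))
        - (∫ y in B, (p (φ k) y - 1) * ‖η y‖ ^ (p (φ k) y / (p (φ k) y - 1)))) atTop
        (nhds ((∫ y in B, pbar y * (inner ℝ (w₀ y) (η y) : ℝ)) + 0
          - (∫ y in B, (pbar y - 1) * ‖η y‖ ^ (pbar y / (pbar y - 1))))) :=
      (hT1φ.add hT2err).sub hT3φ
    have hJ : (∫ y in B, (pbar y * (inner ℝ (w₀ y) (η y) : ℝ)
        - (pbar y - 1) * ‖η y‖ ^ (pbar y / (pbar y - 1))))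
        = (∫ y in B, pbar y * (inner ℝ (w₀ y) (η y) : ℝ)) + 0
          - (∫ y in B, (pbar y - 1) * ‖η y‖ ^ (pbar y / (pbar y - 1))) := by
      rw [integral_sub hA1int hA3int]
      ring
    have hsplit : ∀ k,
        (∫ y in B, (pbar y * (inner ℝ (w (φ k) y) (η y) : ℝ)
          + (p (φ k) y - pbar y) * (inner ℝ (w (φ k) y) (η y) : ℝ)
          - (p (φ k) y - 1) * ‖η y‖ ^ (p (φ k) y / (p (φ k) y - 1))))
        = (∫ y in B, pbar y * (inner ℝ (w (φ k) y) (η y) : ℝ))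
          + (∫ y in B, (p (φ k) y - pbar y) * (inner ℝ (w (φ k) y) (η y) : ℝ))
          - (∫ y in B, (p (φ k) y - 1) * ‖η y‖ ^ (p (φ k) y / (p (φ k) y - 1))) := by
      intro k
      have hadd : Integrable (fun y => pbar y * (inner ℝ (w (φ k) y) (η y) : ℝ)
          + (p (φ k) y - pbar y) * (inner ℝ (w (φ k) y) (η y) : ℝ)) (volume.restrict B) :=
        (hT1int _).add (hT2int _)
      rw [integral_sub hadd (hT3int _), integral_add (hT1int _) (hT2int _)]
    have htend : Tendsto (fun k => ENNReal.ofReal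
        (∫ y in B, (pbar y * (inner ℝ (w (φ k) y) (η y) : ℝ)
          + (p (φ k) y - pbar y) * (inner ℝ (w (φ k) y) (η y) : ℝ)
          - (p (φ k) y - 1) * ‖η y‖ ^ (p (φ k) y / (p (φ k) y - 1))))) atTop
        (nhds (ENNReal.ofReal (∫ y in B, (pbar y * (inner ℝ (w₀ y) (η y) : ℝ)
          - (pbar y - 1) * ‖η y‖ ^ (pbar y / (pbar y - 1)))))) := by
      refine (ENNReal.continuous_ofReal.tendsto _).comp ?_
      rw [hJ]
      exact Tendsto.congr (fun k => (hsplit k).symm) hsum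
    refine le_of_tendsto htend (Eventually.of_forall fun k => ?_)
    exact (hfh_le (φ k)).trans (hφ k).le
  -- choose measurable representative of w₀
  have hw₀m : AEStronglyMeasurable w₀ (volume.restrict B) := hw₀int.1
  set v : EuclideanSpace ℝ (Fin d) → EuclideanSpace ℝ (Fin d) := hw₀m.mk w₀ with hvdef
  have hvmeas : Measurable v := hw₀m.stronglyMeasurable_mk.measurable
  have hvae : w₀ =ᵐ[volume.restrict B] v := hw₀m.ae_eq_mk
  -- the truncated test fields and truncated energies
  set Φ : ℕ → EuclideanSpace ℝ (Fin d) → ℝ :=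
    fun n => ({y | ‖v y‖ ≤ (n:ℝ)}).indicator (fun y => ‖v y‖ ^ pbar y) with hΦdef
  have hΦmeas : ∀ n, Measurable (Φ n) := by
    intro n
    exact (hvmeas.norm.pow hpbarmeas).indicator
      (measurableSet_le hvmeas.norm measurable_const)
  have hΦnonneg : ∀ n y, 0 ≤ Φ n y := by
    intro n y
    simp only [hΦdef]
    by_cases hy : y ∈ {y | ‖v y‖ ≤ (n:ℝ)}
    · rw [indicator_of_mem hy]
      exact Real.rpow_nonneg (norm_nonneg _) _
    · rw [indicator_of_notMem hy]
  have hΦmono : ∀ y, Monotone fun n => Φ n y := by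
    intro y m n hmn
    simp only [hΦdef]
    by_cases hy : ‖v y‖ ≤ (m:ℝ)
    · rw [indicator_of_mem (by exact hy), indicator_of_mem
        (by exact le_trans hy (by exact_mod_cast hmn))]
    · rw [indicator_of_notMem (by exact hy)]
      exact hΦnonneg n y
  -- the key bound for each truncation
  have h1 : ∀ n : ℕ, (∫⁻ y in B, ENNReal.ofReal (Φ n y)) ≤
      Filter.liminf (fun h => ∫⁻ y in B, ENNReal.ofReal (‖w h y‖ ^ p h y)) atTop := by
    intro n
    set Sn : Set (EuclideanSpace ℝ (Fin d)) :=
      (B ∩ {y | ‖v y‖ ≤ (n:ℝ)}) ∩ {y | v y ≠ 0} with hSndef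
    have hSnmeas : MeasurableSet Sn :=
      (hBmeas.inter (measurableSet_le hvmeas.norm measurable_const)).inter
        (hvmeas (measurableSet_singleton 0)).compl
    set ηn : EuclideanSpace ℝ (Fin d) → EuclideanSpace ℝ (Fin d) :=
      Sn.indicator (fun y => (‖v y‖ ^ (pbar y - 2)) • v y) with hηndef
    have hηnm : AEStronglyMeasurable ηn (volume.restrict B) :=
      (((hvmeas.norm.pow (hpbarmeas.sub measurable_const)).smul hvmeas).indicator
        hSnmeas).aestronglyMeasurable
    have hcomb : ∀ y, v y ≠ 0 → ‖v y‖ ^ (pbar y - 2) * ‖v y‖ = ‖v y‖ ^ (pbar y - 1) := by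
      intro y h0
      have hvpos : 0 < ‖v y‖ := norm_pos_iff.mpr h0
      have h2 := Real.rpow_add hvpos (pbar y - 2) 1
      rw [Real.rpow_one] at h2
      have harg : pbar y - 2 + 1 = pbar y - 1 := by ring
      rw [harg] at h2
      exact h2.symm
    have hCb : ∀ y, ‖ηn y‖ ≤ ((n:ℝ) + 1) ^ pP := by
      intro y
      by_cases hy : y ∈ Sn
      · rw [hηndef, indicator_of_mem hy]
        obtain ⟨⟨hyB, hyn⟩, hy0⟩ := hy
        have hvpos : 0 < ‖v y‖ := norm_pos_iff.mpr hy0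
        obtain ⟨hb1, hb2⟩ := hpbarB y hyB
        rw [norm_smul, Real.norm_eq_abs,
          abs_of_nonneg (Real.rpow_nonneg (norm_nonneg _) _), hcomb y hy0]
        refine rpow_bound (norm_nonneg _) ?_ (by exact_mod_cast Nat.le_add_left 1 n) ?_ ?_
        · exact le_trans hyn (by linarith)
        · linarith
        · linarith
      · rw [hηndef, indicator_of_notMem hy, norm_zero]
        positivity
    have hkey := key ηn hηnm (((n:ℝ) + 1) ^ pP) (by positivity) hCb
    -- identify the integrand with Φ n on B
    have hcongr : ∀ᵐ y ∂(volume.restrict B),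
        pbar y * (inner ℝ (w₀ y) (ηn y) : ℝ)
          - (pbar y - 1) * ‖ηn y‖ ^ (pbar y / (pbar y - 1)) = Φ n y := by
      filter_upwards [haeB, hvae] with y hyB hyv
      rw [hyv]
      have hp1 : 1 < pbar y := hpbarrange y hyB
      have hq0 : 0 < pbar y / (pbar y - 1) := div_pos (by linarith) (by linarith)
      by_cases h0 : v y = 0
      · have hnotmem : y ∉ Sn := fun hmem => hmem.2 h0
        simp only [hηndef, hΦdef]
        rw [indicator_of_notMem hnotmem]
        have hmem : y ∈ {y | ‖v y‖ ≤ (n:ℝ)} := by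
          simp only [mem_setOf_eq, h0, norm_zero]
          exact_mod_cast Nat.zero_le n
        rw [indicator_of_mem hmem, h0]
        simp [Real.zero_rpow hq0.ne', Real.zero_rpow (by positivity : (0:ℝ) < pbar y).ne']
      · by_cases hn : ‖v y‖ ≤ (n:ℝ)
        · have hmem : y ∈ Sn := ⟨⟨hyB, hn⟩, h0⟩
          simp only [hηndef, hΦdef]
          rw [indicator_of_mem hmem, indicator_of_mem (by exact hn)]
          have hvpos : 0 < ‖v y‖ := norm_pos_iff.mpr h0
          have hinner : (inner ℝ (v y) ((‖v y‖ ^ (pbar y - 2)) • v y) : ℝ)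
              = ‖v y‖ ^ pbar y := by
            rw [real_inner_smul_right, real_inner_self_eq_norm_mul_norm]
            have h2 := Real.rpow_add hvpos (pbar y - 2) 2
            have h3 : ‖v y‖ ^ (2:ℝ) = ‖v y‖ * ‖v y‖ := by
              rw [show (2:ℝ) = ((2:ℕ):ℝ) by norm_num, Real.rpow_natCast]
              ring
            rw [h3] at h2
            have harg : pbar y - 2 + 2 = pbar y := by ring
            rw [harg] at h2
            rw [← h2]
          have hnorm : ‖(‖v y‖ ^ (pbar y - 2)) • v y‖ = ‖v y‖ ^ (pbar y - 1) := by
            rw [norm_smul, Real.norm_eq_abs,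
              abs_of_nonneg (Real.rpow_nonneg (norm_nonneg _) _), hcomb y h0]
          have hpow : (‖v y‖ ^ (pbar y - 1)) ^ (pbar y / (pbar y - 1))
              = ‖v y‖ ^ pbar y := by
            rw [← Real.rpow_mul (norm_nonneg _)]
            congr 1
            rw [mul_comm, div_mul_cancel₀ _ (sub_ne_zero.mpr (by linarith : pbar y ≠ 1))]
          rw [hinner, hnorm, hpow]
          ring
        · have hnotmem : y ∉ Sn := fun hmem => hn hmem.1.2
          simp only [hηndef, hΦdef]
          rw [indicator_of_notMem hnotmem, indicator_of_notMem (by exact hn)]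
          simp [Real.zero_rpow hq0.ne']
    have hΦint : Integrable (Φ n) (volume.restrict B) := by
      refine Integrable.mono' (integrable_const (((n:ℝ) + 1) ^ pP))
        (hΦmeas n).aestronglyMeasurable ?_
      filter_upwards [haeB] with y hy
      rw [Real.norm_eq_abs, abs_of_nonneg (hΦnonneg n y)]
      simp only [hΦdef]
      by_cases hyn : y ∈ {y | ‖v y‖ ≤ (n:ℝ)}
      · rw [indicator_of_mem hyn]
        obtain ⟨hb1, hb2⟩ := hpbarB y hy
        refine rpow_bound (norm_nonneg _) ?_ (by exact_mod_cast Nat.le_add_left 1 n) ?_ ?_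
        · exact le_trans hyn (by linarith)
        · linarith
        · linarith
      · rw [indicator_of_notMem hyn]
        positivity
    rw [integral_congr_ae hcongr,
      ofReal_integral_eq_lintegral_ofReal hΦint
        (Eventually.of_forall fun y => hΦnonneg n y)] at hkey
    exact hkey
  -- monotone convergence
  have hsup : ∀ y, (⨆ n : ℕ, ENNReal.ofReal (Φ n y)) = ENNReal.ofReal (‖v y‖ ^ pbar y) := by
    intro y
    apply le_antisymm
    · refine iSup_le fun n => ENNReal.ofReal_le_ofReal ?_
      simp only [hΦdef]
      by_cases hy : y ∈ {y | ‖v y‖ ≤ (n:ℝ)}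
      · rw [indicator_of_mem hy]
      · rw [indicator_of_notMem hy]
        exact Real.rpow_nonneg (norm_nonneg _) _
    · refine le_iSup_of_le ⌈‖v y‖⌉₊ (le_of_eq ?_)
      simp only [hΦdef]
      rw [indicator_of_mem (by simp only [mem_setOf_eq]; exact Nat.le_ceil _)]
  have hmct : (∫⁻ y in B, ENNReal.ofReal (‖v y‖ ^ pbar y)) =
      ⨆ n, ∫⁻ y in B, ENNReal.ofReal (Φ n y) := by
    rw [← lintegral_iSup' (fun n => ((hΦmeas n).ennreal_ofReal).aemeasurable)
      (Eventually.of_forall fun y => fun m n hmn =>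
        ENNReal.ofReal_le_ofReal (hΦmono y hmn))]
    exact lintegral_congr fun y => (hsup y).symm
  calc (∫⁻ y in B, ENNReal.ofReal (‖w₀ y‖ ^ pbar y))
      = ∫⁻ y in B, ENNReal.ofReal (‖v y‖ ^ pbar y) := by
        refine lintegral_congr_ae ?_
        filter_upwards [hvae] with y hy
        rw [hy]
    _ = ⨆ n, ∫⁻ y in B, ENNReal.ofReal (Φ n y) := hmct
    _ ≤ _ := iSup_le fun n => h1 n
end
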